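/- arXiv:2102.06668 — 2 statements merged into one kernel-verified Lean document; each statement's English description precedes it below -/
import Mathlib

section
/- Let ρ_old, ρ_new ≥ 0 and u_old, u_new ∈ ℝ^d, and Δt > 0. Then the identity ( (ρ_new u_new - ρ_old u_old)/Δt )·u_new - ( (ρ_new - ρ_old)/Δt )·|u_new|²/2 = (1/Δt)( ½ρ_new|u_new|² - ½ρ_old|u_old|² ) + (Δt/2)·ρ_old·|(u_new - u_old)/Δt|² holds. -/
/-! Expanding `‖u' - u‖² = ‖u'‖² - 2⟪u, u'⟫ + ‖u‖²` turns the identity without the time step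
into a polynomial identity in `ρ, ρ', ‖u‖², ‖u'‖², ⟪u, u'⟫`; the time step then only contributes
an overall factor `Δt⁻¹`. -/

theorem inner_smul_sub_smul_sub_mul_half_norm_sq {E : Type*} [NormedAddCommGroup E]
    [InnerProductSpace ℝ E] (ρ ρ' : ℝ) (u u' : E) :
    inner ℝ (ρ' • u' - ρ • u) u' - (ρ' - ρ) * (‖u'‖ ^ 2 / 2) =
      (1 / 2) * ρ' * ‖u'‖ ^ 2 - (1 / 2) * ρ * ‖u‖ ^ 2 + (1 / 2) * ρ * ‖u' - u‖ ^ 2 := by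
  rw [inner_sub_left, real_inner_smul_left, real_inner_smul_left, real_inner_self_eq_norm_sq,
    norm_sub_sq_real, real_inner_comm]
  ring

theorem stmt_10_general (d : ℕ) (ρo ρn Δt : ℝ) (uo un : EuclideanSpace ℝ (Fin d)) :
    (inner ℝ (Δt⁻¹ • (ρn • un - ρo • uo)) un : ℝ)
        - ((ρn - ρo) / Δt) * (‖un‖ ^ 2 / 2) =
      ((1 / 2) * ρn * ‖un‖ ^ 2 - (1 / 2) * ρo * ‖uo‖ ^ 2) / Δt
        + (Δt / 2) * ρo * ‖Δt⁻¹ • (un - uo)‖ ^ 2 := by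
  have hinv : Δt * Δt⁻¹ ^ 2 = Δt⁻¹ := by
    simpa only [inv_inv, sq, mul_assoc] using inv_mul_mul_self Δt⁻¹
  rw [real_inner_smul_left, norm_smul, mul_pow, Real.norm_eq_abs, sq_abs]
  linear_combination Δt⁻¹ * inner_smul_sub_smul_sub_mul_half_norm_sq ρo ρn uo un
    - (ρo / 2 * ‖un - uo‖ ^ 2) * hinv

/-- Discrete kinetic-energy identity for the backward Euler time discretization
of the momentum equation. -/
theorem stmt_10 (d : ℕ) (ρo ρn Δt : ℝ) (hρo : 0 ≤ ρo) (hρn : 0 ≤ ρn)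
    (hΔt : 0 < Δt) (uo un : EuclideanSpace ℝ (Fin d)) :
    (inner ℝ (Δt⁻¹ • (ρn • un - ρo • uo)) un : ℝ)
        - ((ρn - ρo) / Δt) * (‖un‖ ^ 2 / 2) =
      ((1 / 2) * ρn * ‖un‖ ^ 2 - (1 / 2) * ρo * ‖uo‖ ^ 2) / Δt
        + (Δt / 2) * ρo * ‖Δt⁻¹ • (un - uo)‖ ^ 2 :=
  stmt_10_general d ρo ρn Δt uo un
end

section
/- Let ρ_in, ρ_out ≥ 0, w_in, w_out ∈ ℝ^d, and s ∈ ℝ. Define ρ_up := ρ_in if s ≥ 0 and ρ_out if s < 0, [[w]] := w_out - w_in, ⟨w⟩ := (w_in + w_out)/2. Then ρ_up·( w_up·[[w]] - ½[[|w|²]] )·s = -½ ρ_up |[[w]]|² |s|, where w_up := w_in if s ≥ 0, w_out if s < 0, and [[|w|²]] := |w_out|² - |w_in|². -/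
/-! The upwind value differs from the mean ⟨w⟩ = (w_in + w_out)/2 by ∓½[[w]], the sign being
that of `s`, while ½[[|w|²]] = ⟪⟨w⟩, [[w]]⟫. Hence the bracket equals ∓½|[[w]]|², and
multiplying by `s` turns the sign into `-|s|`. -/

section UpwindFlux

variable {E : Type*} [NormedAddCommGroup E] [InnerProductSpace ℝ E]

theorem inner_sub_sub_half_norm_sq_sub (u v : E) :
    inner ℝ u (v - u) - (‖v‖ ^ 2 - ‖u‖ ^ 2) / 2 = -(‖v - u‖ ^ 2 / 2) := by
  rw [norm_sub_sq_real, inner_sub_right, real_inner_self_eq_norm_sq, real_inner_comm]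
  ring

theorem inner_sub_sub_half_norm_sq_sub' (u v : E) :
    inner ℝ v (v - u) - (‖v‖ ^ 2 - ‖u‖ ^ 2) / 2 = ‖v - u‖ ^ 2 / 2 := by
  rw [norm_sub_sq_real, inner_sub_right, real_inner_self_eq_norm_sq]
  ring

end UpwindFlux

theorem stmt_12_general (d : ℕ) (ρin ρout : ℝ)
    (win wout : EuclideanSpace ℝ (Fin d)) (s : ℝ) :
    (if 0 ≤ s then ρin else ρout) *
        ((inner ℝ (if 0 ≤ s then win else wout) (wout - win) : ℝ)
          - (‖wout‖ ^ 2 - ‖win‖ ^ 2) / 2) * s =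
      -(1 / 2) * (if 0 ≤ s then ρin else ρout) * ‖wout - win‖ ^ 2 * |s| := by
  split_ifs with hs
  · rw [inner_sub_sub_half_norm_sq_sub, abs_of_nonneg hs]
    ring
  · rw [inner_sub_sub_half_norm_sq_sub', abs_of_neg (not_le.mp hs)]
    ring

/-- Pointwise (single-face) upwind-flux energy identity: the upwind convective
flux for the kinetic energy dissipates. -/
theorem stmt_12 (d : ℕ) (ρin ρout : ℝ) (hin : 0 ≤ ρin) (hout : 0 ≤ ρout)
    (win wout : EuclideanSpace ℝ (Fin d)) (s : ℝ) :
    (if 0 ≤ s then ρin else ρout) *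
        ((inner ℝ (if 0 ≤ s then win else wout) (wout - win) : ℝ)
          - (‖wout‖ ^ 2 - ‖win‖ ^ 2) / 2) * s =
      -(1 / 2) * (if 0 ≤ s then ρin else ρout) * ‖wout - win‖ ^ 2 * |s| :=
  stmt_12_general d ρin ρout win wout s
end
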